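/- arXiv:1903.02964 — 3 statements merged into one kernel-verified Lean document; each statement's English description precedes it below -/
import Mathlib

section
/- (Unbiasedness of the SMC sampler estimator of the unnormalized measure.) Consider the SMC sampler on a finite state space U with initial distribution η_0 = Γ_0 (a probability measure), potentials G_j(x) = γ_{j+1}(x)/γ_j(x) satisfying 0 < G_j(x) ≤ C, and Markov kernels M_j leaving η_j invariant. With N particles generated by sampling x_0^i ∼ η_0 i.i.d., then iteratively resampling according to normalized weights G_{j-1} and mutating via M_j, define the empirical measures η_j^N(f) = (1/N)∑_{i=1}^N f(x_j^i) and the estimator Γ_J^N(φ) = (∏_{j=0}^{J-1} η_j^N(G_j)) · η_J^N(φ). Then E[Γ_J^N(φ)] = Γ_J(φ) for every bounded φ : U → ℝ. -/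
/-!
Sum out the last generation first. Given generation `J`, the particles of generation `J + 1`
are i.i.d. with law `∑ₖ G_J(xₖ) M_{J+1}(xₖ, ·) / ∑ₖ G_J(xₖ)`, so the expected empirical mean
of `φ` is this mixture applied to `φ`; multiplied by the factor `η_J^N(G_J)` of the estimator
the normalisation cancels, leaving `η_J^N(G_J · M_{J+1} φ)`. Hence the level-`J + 1` estimator
of `φ` has the expectation of the level-`J` estimator of `G_J · M_{J+1} φ`, which by induction
is `Γ_J(G_J · M_{J+1} φ) = Γ_{J+1}(M_{J+1} φ) = Γ_{J+1}(φ)`, the last step by invariance.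
-/

open Finset

noncomputable section

variable {U : Type*} {N : ℕ}

def empiricalMean (f : U → ℝ) (x : Fin N → U) : ℝ := (1 / (N : ℝ)) * ∑ i, f (x i)

def potential (γ : ℕ → U → ℝ) (j : ℕ) (x : U) : ℝ := γ (j + 1) x / γ j x

def resampleMutate (G : U → ℝ) (K : U → U → ℝ) (x : Fin N → U) (u : U) : ℝ :=
  ∑ k, G (x k) / (∑ k', G (x k')) * K (x k) u

def pathWeight (γ : ℕ → U → ℝ) (M : ℕ → U → U → ℝ) {J : ℕ} (X : Fin (J + 1) → Fin N → U) :
    ℝ :=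
  (∏ i, γ 0 (X 0 i)) *
    ∏ j : Fin J, ∏ i, resampleMutate (potential γ j) (M (j + 1)) (X j.castSucc) (X j.succ i)

def normalizingConstantEstimate (γ : ℕ → U → ℝ) {J : ℕ} (X : Fin (J + 1) → Fin N → U) : ℝ :=
  ∏ j : Fin J, empiricalMean (potential γ j) (X j.castSucc)

section snoc

variable {γ : ℕ → U → ℝ} {J : ℕ} (X : Fin (J + 1) → Fin N → U) (y : Fin N → U)

theorem pathWeight_snoc (M : ℕ → U → U → ℝ) :
    pathWeight γ M (Fin.snoc X y : Fin (J + 2) → Fin N → U) =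
      pathWeight γ M X *
        ∏ i, resampleMutate (potential γ J) (M (J + 1)) (X (Fin.last J)) (y i) := by
  simp [pathWeight, Fin.prod_univ_castSucc (n := J), Fin.succ_castSucc, -Fin.castSucc_succ,
    mul_assoc]

theorem normalizingConstantEstimate_snoc :
    normalizingConstantEstimate γ (Fin.snoc X y : Fin (J + 2) → Fin N → U) =
      normalizingConstantEstimate γ X * empiricalMean (potential γ J) (X (Fin.last J)) := by
  simp [normalizingConstantEstimate, Fin.prod_univ_castSucc (n := J)]

end snoc

variable [Fintype U]

variable (N) in
def expectedEstimate (γ : ℕ → U → ℝ) (M : ℕ → U → U → ℝ) (J : ℕ) (φ : U → ℝ) : ℝ :=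
  ∑ X : Fin (J + 1) → Fin N → U,
    pathWeight γ M X * (normalizingConstantEstimate γ X * empiricalMean φ (X (Fin.last J)))

theorem sum_prod_mul_apply {ι : Type*} [Fintype ι] [DecidableEq ι] {p : U → ℝ}
    (hp : ∑ u, p u = 1) (f : U → ℝ) (i : ι) :
    ∑ y : ι → U, (∏ k, p (y k)) * f (y i) = ∑ u, p u * f u := by
  have hprod (y : ι → U) :
      (∏ k, p (y k)) * f (y i) = ∏ k, p (y k) * if k = i then f (y k) else 1 := by
    rw [prod_mul_distrib, prod_ite_eq' univ i]
    simp
  have hsum (k : ι) :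
      ∑ u, p u * (if k = i then f u else 1) = if k = i then ∑ u, p u * f u else 1 := by
    split_ifs <;> simp [hp]
  simp_rw [hprod, ← Fintype.prod_sum (fun k u => p u * if k = i then f u else 1), hsum]
  simp

theorem sum_prod_mul_empiricalMean (hN : 0 < N) {p : U → ℝ} (hp : ∑ u, p u = 1)
    (f : U → ℝ) :
    ∑ y : Fin N → U, (∏ k, p (y k)) * empiricalMean f y = ∑ u, p u * f u := by
  calc ∑ y : Fin N → U, (∏ k, p (y k)) * empiricalMean f y
      = 1 / (N : ℝ) * ∑ i, ∑ y : Fin N → U, (∏ k, p (y k)) * f (y i) := by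
        simp only [empiricalMean, mul_sum, sum_comm (γ := Fin N)]
        exact sum_congr rfl fun _ _ => sum_congr rfl fun _ _ => by ring
    _ = ∑ u, p u * f u := by
        simp only [sum_prod_mul_apply hp, sum_const, card_univ, Fintype.card_fin, nsmul_eq_mul]
        field_simp

section resampleMutate

variable {G : U → ℝ} {K : U → U → ℝ} {x : Fin N → U}

theorem sum_resampleMutate (hG : ∑ k, G (x k) ≠ 0) (hK : ∀ z, ∑ u, K z u = 1) :
    ∑ u, resampleMutate G K x u = 1 := by
  simp only [resampleMutate]
  rw [sum_comm]
  simp only [← mul_sum, hK, mul_one, ← sum_div, div_self hG]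

theorem empiricalMean_mul_sum_resampleMutate (hG : ∑ k, G (x k) ≠ 0) (φ : U → ℝ) :
    empiricalMean G x * ∑ u, resampleMutate G K x u * φ u =
      empiricalMean (fun z => G z * ∑ u, K z u * φ u) x := by
  have hmix : ∑ u, resampleMutate G K x u * φ u =
      (∑ k, G (x k) * ∑ u, K (x k) u * φ u) / ∑ k, G (x k) := by
    simp only [resampleMutate, sum_mul, mul_sum, sum_div]
    rw [sum_comm]
    exact sum_congr rfl fun _ _ => sum_congr rfl fun _ _ => by ring
  rw [hmix, empiricalMean, empiricalMean, mul_assoc, mul_div_cancel₀ _ hG]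

theorem sum_prod_resampleMutate_mul_empiricalMean (hN : 0 < N) (hG : ∑ k, G (x k) ≠ 0)
    (hK : ∀ z, ∑ u, K z u = 1) (φ : U → ℝ) :
    ∑ y : Fin N → U,
        (∏ i, resampleMutate G K x (y i)) * (empiricalMean G x * empiricalMean φ y) =
      empiricalMean (fun z => G z * ∑ u, K z u * φ u) x := by
  simp only [mul_left_comm _ (empiricalMean G x), ← mul_sum,
    sum_prod_mul_empiricalMean hN (sum_resampleMutate hG hK),
    empiricalMean_mul_sum_resampleMutate hG]

end resampleMutate

theorem expectedEstimate_succ (hN : 0 < N) {γ : ℕ → U → ℝ} {M : ℕ → U → U → ℝ} {J : ℕ}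
    (hγJ : ∀ x, 0 < γ J x) (hγJ' : ∀ x, 0 < γ (J + 1) x) (hM : ∀ z, ∑ u, M (J + 1) z u = 1)
    (φ : U → ℝ) :
    expectedEstimate N γ M (J + 1) φ =
      expectedEstimate N γ M J (fun z => potential γ J z * ∑ u, M (J + 1) z u * φ u) := by
  have hG (x : Fin N → U) : ∑ k, potential γ J (x k) ≠ 0 :=
    (sum_pos (fun k _ => div_pos (hγJ' (x k)) (hγJ (x k)))
      (univ_nonempty_iff.mpr ⟨⟨0, hN⟩⟩)).ne'
  rw [expectedEstimate, ← (Fin.snocEquiv fun _ => Fin N → U).sum_comp,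
    Fintype.sum_prod_type_right]
  refine sum_congr rfl fun X _ => ?_
  have hsnoc (y : Fin N → U) : (Fin.snocEquiv fun _ => Fin N → U) (y, X) = Fin.snoc X y := rfl
  simp only [hsnoc, pathWeight_snoc, normalizingConstantEstimate_snoc, Fin.snoc_last]
  rw [← sum_prod_resampleMutate_mul_empiricalMean hN (hG _) hM, mul_sum, mul_sum]
  exact sum_congr rfl fun y _ => by ring

theorem sum_potential_mul {γ : ℕ → U → ℝ} {j : ℕ} (hγ : ∀ x, 0 < γ j x) (f : U → ℝ) :
    ∑ x, potential γ j x * f x * γ j x = ∑ x, f x * γ (j + 1) x :=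
  sum_congr rfl fun x _ => by
    rw [potential]
    field_simp [(hγ x).ne']

theorem sum_kernel_mul_of_invariant {μ : U → ℝ} {K : U → U → ℝ}
    (hK : ∀ y, ∑ x, μ x * K x y = μ y) (φ : U → ℝ) :
    ∑ x, (∑ u, K x u * φ u) * μ x = ∑ u, φ u * μ u := by
  simp only [sum_mul]
  rw [sum_comm]
  refine sum_congr rfl fun u _ => ?_
  rw [← hK u, mul_sum]
  exact sum_congr rfl fun _ _ => by ring

theorem expectedEstimate_eq (hN : 0 < N) {γ : ℕ → U → ℝ} (hinit : ∑ x, γ 0 x = 1)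
    {M : ℕ → U → U → ℝ} (hMrow : ∀ j x, ∑ y, M j x y = 1) {J : ℕ}
    (hpos : ∀ j, j ≤ J → ∀ x, 0 < γ j x)
    (hMinv : ∀ j, 1 ≤ j → j ≤ J → ∀ y, ∑ x, γ j x * M j x y = γ j y) (φ : U → ℝ) :
    expectedEstimate N γ M J φ = ∑ x, φ x * γ J x := by
  induction J generalizing φ with
  | zero =>
    rw [expectedEstimate, ← (Equiv.funUnique (Fin 1) (Fin N → U)).symm.sum_comp]
    simpa [pathWeight, normalizingConstantEstimate, mul_comm] using
      sum_prod_mul_empiricalMean hN hinit φ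
  | succ J ih =>
    rw [expectedEstimate_succ hN (hpos J (by omega)) (hpos (J + 1) le_rfl) (hMrow (J + 1)),
      ih (fun j hj => hpos j (by omega)) (fun j h1 h2 => hMinv j h1 (by omega)),
      sum_potential_mul (hpos J (by omega)),
      sum_kernel_mul_of_invariant (hMinv (J + 1) (by omega) le_rfl)]

end

theorem smc_unnormalized_estimator_unbiased_general
    (U : Type*) [Fintype U] (J N : ℕ) (hN : 0 < N)
    (γ : ℕ → U → ℝ) (hpos : ∀ j, j ≤ J → ∀ x, 0 < γ j x)
    (hinit : ∑ x, γ 0 x = 1)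
    (M : ℕ → U → U → ℝ)
    (hMrow : ∀ j x, ∑ y, M j x y = 1)
    (hMinv : ∀ j, 1 ≤ j → j ≤ J → ∀ y, ∑ x, γ j x * M j x y = γ j y)
    (φ : U → ℝ) :
    ∑ X : Fin (J + 1) → Fin N → U,
      (((∏ i, γ 0 (X 0 i)) *
        ∏ j : Fin J, ∏ i,
          (∑ k, ((γ ((j : ℕ) + 1) (X j.castSucc k) / γ (j : ℕ) (X j.castSucc k)) /
              (∑ k', γ ((j : ℕ) + 1) (X j.castSucc k') / γ (j : ℕ) (X j.castSucc k'))) *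
            M ((j : ℕ) + 1) (X j.castSucc k) (X j.succ i))) *
      ((∏ j : Fin J, (1 / (N : ℝ)) *
          ∑ i, γ ((j : ℕ) + 1) (X j.castSucc i) / γ (j : ℕ) (X j.castSucc i)) *
        ((1 / (N : ℝ)) * ∑ i, φ (X (Fin.last J) i)))) =
    ∑ x, φ x * γ J x := by
  show expectedEstimate N γ M J φ = ∑ x, φ x * γ J x
  exact expectedEstimate_eq hN hinit hMrow hpos hMinv φ

/-- Unbiasedness of the SMC sampler estimator of the unnormalized measure.
The particle system is described by its exact joint law on the finite
configuration space `Fin (J+1) → Fin N → U`: particles are initialized i.i.d.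
from `η₀ = γ₀`, and at each step each particle independently resamples an index
according to the normalized weights `G_{j} = γ_{j+1}/γ_j` and then mutates via
the `η_{j+1}`-invariant kernel `M_{j+1}`.  The expectation of the estimator
`Γ_J^N(φ) = (∏_j η_j^N(G_j)) η_J^N(φ)` equals `Γ_J(φ) = ∑_x φ(x) γ_J(x)`. -/
theorem smc_unnormalized_estimator_unbiased
    (U : Type*) [Fintype U] [Nonempty U] (J N : ℕ) (hN : 0 < N)
    (γ : ℕ → U → ℝ) (hpos : ∀ j, j ≤ J → ∀ x, 0 < γ j x)
    (hinit : ∑ x, γ 0 x = 1)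
    (C : ℝ) (hGC : ∀ j, j < J → ∀ x : U, γ (j + 1) x / γ j x ≤ C)
    (M : ℕ → U → U → ℝ)
    (hMnn : ∀ j x y, 0 ≤ M j x y)
    (hMrow : ∀ j x, ∑ y, M j x y = 1)
    (hMinv : ∀ j, 1 ≤ j → j ≤ J → ∀ y, ∑ x, γ j x * M j x y = γ j y)
    (φ : U → ℝ) :
    ∑ X : Fin (J + 1) → Fin N → U,
      (((∏ i, γ 0 (X 0 i)) *
        ∏ j : Fin J, ∏ i,
          (∑ k, ((γ ((j : ℕ) + 1) (X j.castSucc k) / γ (j : ℕ) (X j.castSucc k)) /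
              (∑ k', γ ((j : ℕ) + 1) (X j.castSucc k') / γ (j : ℕ) (X j.castSucc k'))) *
            M ((j : ℕ) + 1) (X j.castSucc k) (X j.succ i))) *
      ((∏ j : Fin J, (1 / (N : ℝ)) *
          ∑ i, γ ((j : ℕ) + 1) (X j.castSucc i) / γ (j : ℕ) (X j.castSucc i)) *
        ((1 / (N : ℝ)) * ∑ i, φ (X (Fin.last J) i)))) =
    ∑ x, φ x * γ J x :=
  smc_unnormalized_estimator_unbiased_general U J N hN γ hpos hinit M hMrow hMinv φ
end

section
/- (Single-term debiased estimator.) Let (Δ_l)_{l≥0} be random variables with ∑_{l=0}^∞ E|Δ_l| < ∞ and define Z̄ = ∑_{l=0}^∞ E[Δ_l]. Let p = (p_0, p_1, ...) be a probability distribution on ℕ with p_l > 0 whenever E[Δ_l] ≠ 0, and let L ∼ p be independent of (Δ_l). Then the estimator Ẑ_s = Δ_L / p_L satisfies E[Ẑ_s] = Z̄. -/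
/-!
Decompose along the value of `L`: `Δ_L / p_L = ∑_l 1{L = l} Δ_l / p_l`. By independence the
`l`-th term has mean `P(L = l) E[Δ_l] / p_l = E[Δ_l]` (where `p_l ≤ 0` the cell is null and
`E[Δ_l] = 0`), and its absolute mean is at most `E|Δ_l|`, which is summable, so expectation
and sum may be exchanged.
-/

open MeasureTheory ProbabilityTheory

section

variable {Ω : Type*} [MeasurableSpace Ω] {μ : Measure Ω}

theorem ProbabilityTheory.IndepFun.setIntegral_preimage_eq_measureReal_mul {α : Type*}
    [MeasurableSpace α] {L : Ω → α} {X : Ω → ℝ} (hLX : IndepFun L X μ) (hL : Measurable L)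
    (hX : AEStronglyMeasurable X μ) {t : Set α} (ht : MeasurableSet t) :
    ∫ ω in L ⁻¹' t, X ω ∂μ = μ.real (L ⁻¹' t) * ∫ ω, X ω ∂μ := by
  have hind : IndepFun (fun ω => t.indicator (1 : α → ℝ) (L ω)) X μ :=
    hLX.comp (measurable_one.indicator ht) measurable_id
  have hmul : (L ⁻¹' t).indicator X = fun ω => t.indicator 1 (L ω) * X ω := by
    ext ω
    by_cases h : L ω ∈ t <;> simp [h]
  rw [← integral_indicator (hL ht), hmul, hind.integral_fun_mul_eq_mul_integral
    ((measurable_one.indicator ht).comp hL).aestronglyMeasurable hX]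
  simp only [← Set.indicator_comp_right, Pi.one_comp, integral_indicator_one (hL ht)]

theorem MeasureTheory.integral_eq_tsum_setIntegral_preimage_singleton {ι E : Type*}
    [Countable ι] [MeasurableSpace ι] [MeasurableSingletonClass ι] [NormedAddCommGroup E]
    [NormedSpace ℝ E] {L : Ω → ι} (hL : Measurable L) {F : ι → Ω → E}
    (hF_int : ∀ i, IntegrableOn (F i) (L ⁻¹' {i}) μ)
    (hF_sum : Summable fun i => ∫ ω in L ⁻¹' {i}, ‖F i ω‖ ∂μ) :
    ∫ ω, F (L ω) ω ∂μ = ∑' i, ∫ ω in L ⁻¹' {i}, F i ω ∂μ := by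
  have hcell : ∀ i, MeasurableSet (L ⁻¹' {i}) := fun i => hL (measurableSet_singleton i)
  have hpt : ∀ ω, ∑' i, (L ⁻¹' {i}).indicator (F i) ω = F (L ω) ω := by
    intro ω
    rw [tsum_eq_single (L ω) fun i hi => Set.indicator_of_notMem (by simpa [eq_comm] using hi) _]
    exact Set.indicator_of_mem (Set.mem_preimage.2 rfl) (F (L ω))
  simp_rw [← hpt, ← integral_indicator (hcell _)]
  refine (integral_tsum_of_summable_integral_norm
    (fun i => (hF_int i).integrable_indicator (hcell i)) ?_).symm
  simpa only [norm_indicator_eq_indicator_norm, integral_indicator (hcell _)] using hF_sum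

end

theorem max_zero_mul_div_eq_self {a p : ℝ} (h : a ≠ 0 → 0 < p) : max p 0 * (a / p) = a := by
  rcases le_or_gt p 0 with hp | hp
  · simp [not_imp_comm.1 h hp.not_gt]
  · rw [max_eq_left hp.le, mul_div_cancel₀ _ hp.ne']

theorem max_zero_mul_div_abs_le {a p : ℝ} (ha : 0 ≤ a) : max p 0 * (a / |p|) ≤ a := by
  rcases le_or_gt p 0 with hp | hp
  · simpa [max_eq_right hp] using ha
  · rw [max_eq_left hp.le, abs_of_pos hp, mul_div_cancel₀ _ hp.ne']

theorem single_term_debiased_unbiased_general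
    {Ω : Type*} [MeasurableSpace Ω] (μ : Measure Ω)
    (Δ : ℕ → Ω → ℝ)
    (hint : ∀ l, Integrable (Δ l) μ)
    (hsum : Summable fun l => ∫ ω, |Δ l ω| ∂μ)
    (L : Ω → ℕ) (hL : Measurable L)
    (p : ℕ → ℝ)
    (hp_law : ∀ l, μ (L ⁻¹' {l}) = ENNReal.ofReal (p l))
    (hp_pos : ∀ l, (∫ ω, Δ l ω ∂μ) ≠ 0 → 0 < p l)
    (hindep : IndepFun L (fun ω l => Δ l ω) μ) :
    ∫ ω, Δ (L ω) ω / p (L ω) ∂μ = ∑' l, ∫ ω, Δ l ω ∂μ := by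
  have hcell : ∀ l (φ : ℝ → ℝ), Measurable φ →
      ∫ ω in L ⁻¹' {l}, φ (Δ l ω) ∂μ = max (p l) 0 * ∫ ω, φ (Δ l ω) ∂μ := by
    intro l φ hφ
    have hindep_l : IndepFun L (fun ω => φ (Δ l ω)) μ :=
      hindep.comp measurable_id (hφ.comp (measurable_pi_apply l))
    rw [hindep_l.setIntegral_preimage_eq_measureReal_mul hL
      (hφ.comp_aemeasurable (hint l).aemeasurable).aestronglyMeasurable
      (measurableSet_singleton l), measureReal_def, hp_law, ENNReal.toReal_ofReal']
  have hterm : ∀ l, ∫ ω in L ⁻¹' {l}, Δ l ω / p l ∂μ = ∫ ω, Δ l ω ∂μ := fun l => by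
    rw [hcell l (· / p l) (measurable_id.div_const _), integral_div,
      max_zero_mul_div_eq_self (hp_pos l)]
  have hterm_norm : ∀ l, ∫ ω in L ⁻¹' {l}, ‖Δ l ω / p l‖ ∂μ ≤ ∫ ω, |Δ l ω| ∂μ := fun l => by
    rw [hcell l (‖· / p l‖) (measurable_id.div_const _).norm]
    simp only [norm_div, Real.norm_eq_abs, integral_div]
    exact max_zero_mul_div_abs_le (integral_nonneg fun ω => abs_nonneg (Δ l ω))
  rw [integral_eq_tsum_setIntegral_preimage_singleton hL (F := fun l ω => Δ l ω / p l)
    (fun l => ((hint l).div_const _).integrableOn)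
    (hsum.of_nonneg_of_le (fun l => integral_nonneg fun _ => norm_nonneg _) hterm_norm)]
  exact tsum_congr hterm

/-- Single-term debiased estimator: if `L ∼ p` is independent of the sequence
`(Δ_l)`, `∑_l E|Δ_l| < ∞`, and `p_l > 0` whenever `E[Δ_l] ≠ 0`, then
`E[Δ_L / p_L] = ∑_l E[Δ_l]`. -/
theorem single_term_debiased_unbiased
    {Ω : Type*} [MeasurableSpace Ω] (μ : Measure Ω) [IsProbabilityMeasure μ]
    (Δ : ℕ → Ω → ℝ) (hmeas : ∀ l, Measurable (Δ l))
    (hint : ∀ l, Integrable (Δ l) μ)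
    (hsum : Summable fun l => ∫ ω, |Δ l ω| ∂μ)
    (L : Ω → ℕ) (hL : Measurable L)
    (p : ℕ → ℝ) (hp_nonneg : ∀ l, 0 ≤ p l)
    (hp_law : ∀ l, μ (L ⁻¹' {l}) = ENNReal.ofReal (p l))
    (hp_pos : ∀ l, (∫ ω, Δ l ω ∂μ) ≠ 0 → 0 < p l)
    (hindep : IndepFun L (fun ω l => Δ l ω) μ) :
    ∫ ω, Δ (L ω) ω / p (L ω) ∂μ = ∑' l, ∫ ω, Δ l ω ∂μ :=
  single_term_debiased_unbiased_general μ Δ hint hsum L hL p hp_law hp_pos hindep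
end

section
/- (Self-normalized importance sampling identity in expectation via ratio of unbiased estimators.) Let U be a finite set, γ_0 a probability density on U and γ_J a strictly positive unnormalized density. Let (x_0^i, ..., x_J^i), i = 1,...,N, be i.i.d. paths with x_0^i ∼ γ_0 and x_j^i ∼ M_j(x_{j-1}^i, ·), where each M_j leaves η_j = γ_j/Γ_j(1) invariant, and set W^i = ∏_{j=1}^J G_{j-1}(x_{j-1}^i) with G_j = γ_{j+1}/γ_j. Then E[(1/N)∑_{i=1}^N W^i φ(x_J^i)] = Γ_J(φ) for every bounded φ : U → ℝ, i.e. the annealed importance sampling estimator is unbiased for the unnormalized measure. -/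
open Finset

/-!
Independence of the `N` paths reduces the expectation of the average to the expectation of
`W φ(x_J)` along a single path. For one path we induct on `J`: integrating out the last move
`x_{J-1} → x_J` and absorbing the last weight factor `γ_J / γ_{J-1}` turns `E[W φ(x_J)]` into
`Γ_{J-1}(ψ)` with `ψ = (γ_J / γ_{J-1}) · M_J φ`, that is into `Γ_J(M_J φ)`, which equals
`Γ_J(φ)` because `M_J` leaves `γ_J` invariant.
-/

section

variable {R : Type*}

theorem sum_pi_mul_apply {ι α : Type*} [Fintype ι] [DecidableEq ι] [Fintype α]
    [CommSemiring R] (P f : α → R) (hP : ∑ y, P y = 1) (i : ι) :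
    ∑ Y : ι → α, (∏ k, P (Y k)) * f (Y i) = ∑ y, P y * f y := by
  calc ∑ Y : ι → α, (∏ k, P (Y k)) * f (Y i)
      = ∑ Y : ι → α, ∏ k, P (Y k) * (if k = i then f (Y k) else 1) := by
        refine sum_congr rfl fun Y _ => ?_
        rw [prod_mul_distrib, prod_ite_eq' univ i, if_pos (mem_univ i)]
    _ = ∏ k, ∑ y, P y * (if k = i then f y else 1) :=
        (Fintype.prod_sum fun k y => P y * if k = i then f y else 1).symm
    _ = ∑ y, P y * f y := by
        simp only [mul_ite, mul_one, sum_ite_irrel, hP, prod_ite_eq',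
          mem_univ, if_true]

theorem sum_pi_mul_average {ι α : Type*} [Fintype ι] [DecidableEq ι] [Nonempty ι] [Fintype α]
    [Field R] [CharZero R] (P f : α → R) (hP : ∑ y, P y = 1) :
    ∑ Y : ι → α, (∏ k, P (Y k)) * ((1 / (Fintype.card ι : R)) * ∑ i, f (Y i)) =
      ∑ y, P y * f y := by
  have hcard : (Fintype.card ι : R) ≠ 0 := Nat.cast_ne_zero.mpr Fintype.card_ne_zero
  simp only [mul_left_comm _ (1 / _ : R), mul_sum]
  rw [sum_comm]
  simp only [← mul_sum, sum_pi_mul_apply P f hP, sum_const, card_univ, nsmul_eq_mul]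
  field_simp

theorem sum_pi_fin_succ_eq_sum_snoc {α : Type*} [Fintype α] [AddCommMonoid R] {n : ℕ}
    (F : (Fin (n + 1) → α) → R) :
    ∑ y, F y = ∑ y : Fin n → α, ∑ x, F (Fin.snoc y x) := by
  rw [← (Fin.snocEquiv fun _ => α).sum_comp, Fintype.sum_prod_type, sum_comm]
  rfl

theorem sum_mul_sum_kernel_of_invariant {U : Type*} [Fintype U] [CommSemiring R]
    (γ : U → R) (K : U → U → R) (hinv : ∀ y, ∑ x, γ x * K x y = γ y) (φ : U → R) :
    ∑ z, γ z * ∑ x, K z x * φ x = ∑ x, φ x * γ x := by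
  calc ∑ z, γ z * ∑ x, K z x * φ x = ∑ x, (∑ z, γ z * K z x) * φ x := by
        simp only [mul_sum, sum_mul, mul_assoc]
        exact sum_comm
    _ = ∑ x, φ x * γ x := by simp only [hinv, mul_comm]

variable {U : Type*}

def pathDensity [CommSemiring R] (μ : U → R) (M : ℕ → U → U → R) {J : ℕ}
    (y : Fin (J + 1) → U) : R :=
  μ (y 0) * ∏ j : Fin J, M ((j : ℕ) + 1) (y j.castSucc) (y j.succ)

def aisWeight [Field R] (γ : ℕ → U → R) {J : ℕ} (y : Fin (J + 1) → U) : R :=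
  ∏ j : Fin J, γ ((j : ℕ) + 1) (y j.castSucc) / γ (j : ℕ) (y j.castSucc)

theorem pathDensity_snoc [CommSemiring R] (μ : U → R) (M : ℕ → U → U → R) {J : ℕ}
    (y : Fin (J + 1) → U) (x : U) :
    pathDensity μ M (Fin.snoc y x : Fin (J + 2) → U) =
      pathDensity μ M y * M (J + 1) (y (Fin.last J)) x := by
  have h0 : (0 : Fin (J + 2)) = Fin.castSucc 0 := rfl
  simp only [pathDensity, Fin.prod_univ_castSucc, h0, Fin.snoc_castSucc, Fin.succ_castSucc,
    Fin.succ_last, Fin.snoc_last, Fin.val_castSucc, Fin.val_last, mul_assoc]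

theorem aisWeight_snoc [Field R] (γ : ℕ → U → R) {J : ℕ} (y : Fin (J + 1) → U) (x : U) :
    aisWeight γ (Fin.snoc y x : Fin (J + 2) → U) =
      aisWeight γ y * (γ (J + 1) (y (Fin.last J)) / γ J (y (Fin.last J))) := by
  simp only [aisWeight, Fin.prod_univ_castSucc, Fin.snoc_castSucc, Fin.val_castSucc,
    Fin.val_last]

theorem sum_pathDensity [Fintype U] [CommSemiring R] (μ : U → R) (M : ℕ → U → U → R)
    (hMrow : ∀ j x, ∑ y, M j x y = 1) (J : ℕ) :
    ∑ y : Fin (J + 1) → U, pathDensity μ M y = ∑ x, μ x := by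
  induction J with
  | zero =>
    rw [← (Equiv.funUnique (Fin 1) U).symm.sum_comp]
    simp [pathDensity]
  | succ J ih =>
    simp only [sum_pi_fin_succ_eq_sum_snoc, pathDensity_snoc, ← mul_sum, hMrow, mul_one,
      ih]

theorem sum_pathDensity_mul_aisWeight [Fintype U] [Field R] (γ : ℕ → U → R)
    (M : ℕ → U → U → R) (J : ℕ) (hne : ∀ j < J, ∀ x, γ j x ≠ 0)
    (hMinv : ∀ j, 1 ≤ j → j ≤ J → ∀ y, ∑ x, γ j x * M j x y = γ j y) (φ : U → R) :
    ∑ y : Fin (J + 1) → U, pathDensity (γ 0) M y * (aisWeight γ y * φ (y (Fin.last J))) =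
      ∑ x, φ x * γ J x := by
  induction J generalizing φ with
  | zero =>
    rw [← (Equiv.funUnique (Fin 1) U).symm.sum_comp]
    simp [pathDensity, aisWeight, mul_comm]
  | succ J ih =>
    set ψ : U → R := fun z => γ (J + 1) z / γ J z * ∑ x, M (J + 1) z x * φ x
    calc _ = ∑ y : Fin (J + 1) → U,
            pathDensity (γ 0) M y * (aisWeight γ y * ψ (y (Fin.last J))) := by
          rw [sum_pi_fin_succ_eq_sum_snoc]
          refine sum_congr rfl fun y _ => ?_
          simp only [pathDensity_snoc, aisWeight_snoc, Fin.snoc_last, ψ, mul_sum]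
          exact sum_congr rfl fun x _ => by ring
      _ = ∑ z, ψ z * γ J z :=
          ih (fun j hj => hne j (hj.trans J.lt_succ_self))
            (fun j h1 h2 => hMinv j h1 (h2.trans J.le_succ)) ψ
      _ = ∑ z, γ (J + 1) z * ∑ x, M (J + 1) z x * φ x := by
          refine sum_congr rfl fun z _ => ?_
          rw [mul_right_comm, div_mul_cancel₀ _ (hne J J.lt_succ_self z)]
      _ = ∑ x, φ x * γ (J + 1) x :=
          sum_mul_sum_kernel_of_invariant _ _ (hMinv (J + 1) J.succ_pos le_rfl) φ

end

theorem ais_estimator_unbiased_general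
    (U : Type*) [Fintype U] (J N : ℕ) (hN : 0 < N)
    (γ : ℕ → U → ℝ) (hpos : ∀ j, j ≤ J → ∀ x, 0 < γ j x)
    (hinit : ∑ x, γ 0 x = 1)
    (M : ℕ → U → U → ℝ)
    (hMrow : ∀ j x, ∑ y, M j x y = 1)
    (hMinv : ∀ j, 1 ≤ j → j ≤ J → ∀ y, ∑ x, γ j x * M j x y = γ j y)
    (φ : U → ℝ) :
    ∑ Y : Fin N → Fin (J + 1) → U,
      ((∏ i, (γ 0 (Y i 0) *
          ∏ j : Fin J, M ((j : ℕ) + 1) (Y i j.castSucc) (Y i j.succ))) *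
        ((1 / (N : ℝ)) * ∑ i,
          (∏ j : Fin J,
            γ ((j : ℕ) + 1) (Y i j.castSucc) / γ (j : ℕ) (Y i j.castSucc)) *
            φ (Y i (Fin.last J)))) =
    ∑ x, φ x * γ J x := by
  have : Nonempty (Fin N) := ⟨⟨0, hN⟩⟩
  have hmass : ∑ y : Fin (J + 1) → U, pathDensity (γ 0) M y = 1 :=
    (sum_pathDensity (γ 0) M hMrow J).trans hinit
  have hne : ∀ j < J, ∀ x, γ j x ≠ 0 := fun j hj x => (hpos j hj.le x).ne'
  have h := (sum_pi_mul_average (ι := Fin N) _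
    (fun y => aisWeight γ y * φ (y (Fin.last J))) hmass).trans
      (sum_pathDensity_mul_aisWeight γ M J hne hMinv φ)
  rw [Fintype.card_fin] at h
  exact h

/-- Unbiasedness of the annealed importance sampling estimator (SMC sampler
without resampling): with `N` i.i.d. paths generated from `γ_0` via the
`η_j`-invariant kernels `M_j`, and weights `W^i = ∏_j G_{j-1}(x_{j-1}^i)`, the
estimator `(1/N)∑_i W^i φ(x_J^i)` has expectation `Γ_J(φ)`. -/
theorem ais_estimator_unbiased
    (U : Type*) [Fintype U] [Nonempty U] (J N : ℕ) (hN : 0 < N)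
    (γ : ℕ → U → ℝ) (hpos : ∀ j, j ≤ J → ∀ x, 0 < γ j x)
    (hinit : ∑ x, γ 0 x = 1)
    (M : ℕ → U → U → ℝ)
    (hMnn : ∀ j x y, 0 ≤ M j x y)
    (hMrow : ∀ j x, ∑ y, M j x y = 1)
    (hMinv : ∀ j, 1 ≤ j → j ≤ J → ∀ y, ∑ x, γ j x * M j x y = γ j y)
    (φ : U → ℝ) :
    ∑ Y : Fin N → Fin (J + 1) → U,
      ((∏ i, (γ 0 (Y i 0) *
          ∏ j : Fin J, M ((j : ℕ) + 1) (Y i j.castSucc) (Y i j.succ))) *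
        ((1 / (N : ℝ)) * ∑ i,
          (∏ j : Fin J,
            γ ((j : ℕ) + 1) (Y i j.castSucc) / γ (j : ℕ) (Y i j.castSucc)) *
            φ (Y i (Fin.last J)))) =
    ∑ x, φ x * γ J x :=
  ais_estimator_unbiased_general U J N hN γ hpos hinit M hMrow hMinv φ
end
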